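/- arXiv:2411.08797 — 2 statements merged into one kernel-verified Lean document; each statement's English description precedes it below -/
import Mathlib

section
/- Let t be a positive integer, set s = 6t and r = 4s², let f : X → X be an acyclic function, and let H ⊆ X be an r-forward-independent hitting set. Define the coloring c_H : X → {0,1} as in the construction below, and set U_i = c_H^{-1}({i}). Then X = U_0 ⊔ U_1, and for each i ∈ {0,1}, every equivalence class of F_t(U_i) (the equivalence relation on U_i generated by pairs at ρ_f-distance at most t) has ρ_f-diameter at most 28t + 7. -/
set_option linter.unusedVariables false

def Acyclic {X : Type*} (f : X → X) : Prop := ∀ x : X, ∀ k : ℕ, 1 ≤ k → f^[k] x ≠ x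

def Hitting {X : Type*} (f : X → X) (H : Set X) : Prop :=
  ∀ x : X, ∃ k : ℕ, 1 ≤ k ∧ f^[k] x ∈ H

def FwdIndep {X : Type*} (f : X → X) (r : ℕ) (H : Set X) : Prop :=
  ∀ x ∈ H, ∀ k : ℕ, 1 ≤ k → f^[k] x ∈ H → r < k

def funGraph {X : Type*} (f : X → X) : SimpleGraph X where
  Adj x y := x ≠ y ∧ (f x = y ∨ f y = x)
  symm := ⟨fun x y h => ⟨h.1.symm, h.2.symm⟩⟩
  loopless := ⟨fun x h => h.1 rfl⟩

/-- `x` and `y` are reachable from one another and at graph distance at most `r`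
in the graph generated by `f`. -/
def distLE {X : Type*} (f : X → X) (r : ℕ) (x y : X) : Prop :=
  (funGraph f).Reachable x y ∧ (funGraph f).dist x y ≤ r

/-- The generating relation of the equivalence relation `F_t(U)`. -/
def classRel {X : Type*} (f : X → X) (t : ℕ) (U : Set X) : X → X → Prop :=
  fun a b => a ∈ U ∧ b ∈ U ∧ distLE f t a b

/-- The ball of radius `t` around `x` in the graph generated by `f`. -/
def ball {X : Type*} (f : X → X) (t : ℕ) (x : X) : Set X := {y | distLE f t x y}

/-- A directed path of length `k` from `u` to `w` in the digraph `E`. -/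
def DiPath {V : Type*} (E : V → V → Prop) (k : ℕ) (u w : V) : Prop :=
  ∃ p : ℕ → V, p 0 = u ∧ p k = w ∧ ∀ i < k, E (p i) (p (i+1))

/-- The digraph `D_r` on ℕ. -/
def Drel (r : ℕ) (k l : ℕ) : Prop := (0 < k ∧ l = k - 1) ∨ (k = 0 ∧ r ≤ l)

/-- A directed path of length `k` from `u` to `w` staying inside `A`. -/
def PathIn {V : Type*} (E : V → V → Prop) (A : Set V) (k : ℕ) (u w : V) : Prop :=
  ∃ p : ℕ → V, p 0 = u ∧ p k = w ∧ (∀ i ≤ k, p i ∈ A) ∧ ∀ i < k, E (p i) (p (i+1))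

/-- `A` is a strong connectivity component of the digraph `E`. -/
def IsSCC {V : Type*} (E : V → V → Prop) (A : Set V) : Prop :=
  (∀ v ∈ A, ∀ w ∈ A, ∃ k, PathIn E A k v w) ∧
  ∀ B : Set V, A ⊆ B → (∀ v ∈ B, ∀ w ∈ B, ∃ k, PathIn E B k v w) → B = A

/-! The colour of `x` is determined by its level `k x` (the number of steps to its anchor
`f^[k x] x ∈ H`) and by the colour of its anchor: it is constant on blocks of `s` or `s + 1`
consecutive levels and alternates between blocks. Blocks are longer than `t`, so two points of the
same colour that meet within `t` steps before their anchor lie in the same block; if one of them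
passes its anchor, it lies in the lowest block, which has the colour of the anchor, and the
anchor, being far from `H`, takes its place. Sending every point to the point `t` levels below
the start of its block (for the lowest block: of its anchor's block) is therefore constant on the
classes of `F_t(U_i)`, and it moves points by at most `2s + 2t = 14t` steps. -/

open Function

section Walks

variable {X : Type*} {f : X → X}

theorem exists_walk_iterate (hf : ∀ x, f x ≠ x) (x : X) (p : ℕ) :
    ∃ w : (funGraph f).Walk x (f^[p] x), w.length = p := by
  induction p with
  | zero => exact ⟨.nil, rfl⟩
  | succ n ih =>
    obtain ⟨w, hw⟩ := ih
    have hadj : (funGraph f).Adj (f^[n] x) (f^[n + 1] x) := by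
      rw [iterate_succ_apply']
      exact ⟨(hf _).symm, Or.inl rfl⟩
    exact ⟨w.concat hadj, by rw [SimpleGraph.Walk.length_concat, hw]⟩

theorem distLE_of_iterate_eq (hf : ∀ x, f x ≠ x) {x y : X} {p q n : ℕ}
    (h : f^[p] x = f^[q] y) (hn : p + q ≤ n) : distLE f n x y := by
  obtain ⟨w₁, hw₁⟩ := exists_walk_iterate hf x p
  obtain ⟨w₂, hw₂⟩ := exists_walk_iterate hf y q
  let w := w₁.append (w₂.copy rfl h.symm).reverse
  refine ⟨w.reachable, (SimpleGraph.dist_le w).trans ?_⟩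
  simp only [w, SimpleGraph.Walk.length_append, SimpleGraph.Walk.length_reverse,
    SimpleGraph.Walk.length_copy, hw₁, hw₂]
  exact hn

theorem exists_iterate_eq_of_walk {x y : X} (w : (funGraph f).Walk x y) :
    ∃ p q, p + q ≤ w.length ∧ f^[p] x = f^[q] y := by
  induction w with
  | nil => exact ⟨0, 0, le_rfl, rfl⟩
  | cons hadj w ih =>
    obtain ⟨p, q, hpq, h⟩ := ih
    rw [SimpleGraph.Walk.length_cons]
    rcases hadj.2 with huv | hvu
    · exact ⟨p + 1, q, by omega, by rw [iterate_succ_apply, huv, h]⟩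
    · cases p with
      | zero => exact ⟨0, q + 1, by omega, by rw [iterate_succ_apply', ← h, ← hvu]; rfl⟩
      | succ p => exact ⟨p, q, by omega, by rw [← h, iterate_succ_apply, hvu]⟩

theorem exists_iterate_eq_of_distLE {x y : X} {n : ℕ} (h : distLE f n x y) :
    ∃ p q, p + q ≤ n ∧ f^[p] x = f^[q] y := by
  obtain ⟨w, hw⟩ := h.1.exists_walk_length_eq_dist
  obtain ⟨p, q, hpq, hmeet⟩ := exists_iterate_eq_of_walk w
  exact ⟨p, q, hpq.trans (hw.trans_le h.2), hmeet⟩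

theorem distLE_of_eqvGen_classRel (hf : ∀ x, f x ≠ x) {U : Set X} {t n : ℕ} (C : X → X)
    (hCf : ∀ x, ∃ p ≤ n, C x = f^[p] x)
    (hC : ∀ x ∈ U, ∀ y ∈ U, ∀ p q, p + q ≤ t → f^[p] x = f^[q] y → C x = C y)
    {y z : X} (h : Relation.EqvGen (classRel f t U) y z) : distLE f (2 * n) y z := by
  have hCyz : C y = C z := by
    refine (InvImage.equivalence _ C eq_equivalence).eqvGen_iff.1 (h.mono ?_)
    rintro a b ⟨ha, hb, hab⟩
    obtain ⟨p, q, hpq, hmeet⟩ := exists_iterate_eq_of_distLE hab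
    exact hC a ha b hb p q hpq hmeet
  obtain ⟨p, hp, hy⟩ := hCf y
  obtain ⟨q, hq, hz⟩ := hCf z
  exact distLE_of_iterate_eq hf (hy ▸ hz ▸ hCyz) (by omega)

end Walks

section Blocks

def IsCutSeq (s : ℕ) (b : ℕ → ℕ) : Prop :=
  b 0 = 0 ∧ ∀ j, b j + s ≤ b (j + 1) ∧ b (j + 1) ≤ b j + s + 1

/-- Searching up to `ℓ` suffices, as `j ≤ b j` for a cut sequence. -/
def blockIdx (b : ℕ → ℕ) (ℓ : ℕ) : ℕ := Nat.findGreatest (fun j => b j ≤ ℓ) ℓ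

def blockStart (b : ℕ → ℕ) (ℓ : ℕ) : ℕ := b (blockIdx b ℓ)

variable {s : ℕ} {b : ℕ → ℕ}

theorem IsCutSeq.strictMono (hb : IsCutSeq s b) (hs : 0 < s) : StrictMono b :=
  strictMono_nat_of_lt_succ fun j => by have := (hb.2 j).1; omega

theorem IsCutSeq.blockIdx_spec (hb : IsCutSeq s b) (hs : 0 < s) (ℓ : ℕ) :
    b (blockIdx b ℓ) ≤ ℓ ∧ ℓ < b (blockIdx b ℓ + 1) := by
  refine ⟨Nat.findGreatest_spec (P := fun j => b j ≤ ℓ) (Nat.zero_le ℓ) (by simp [hb.1]), ?_⟩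
  by_contra! h
  have hle : blockIdx b ℓ + 1 ≤ ℓ := ((hb.strictMono hs).id_le _).trans h
  exact Nat.findGreatest_is_greatest (Nat.lt_succ_self _) hle h

theorem IsCutSeq.blockIdx_eq (hb : IsCutSeq s b) (hs : 0 < s) {ℓ j : ℕ}
    (h₁ : b j ≤ ℓ) (h₂ : ℓ < b (j + 1)) : blockIdx b ℓ = j := by
  obtain ⟨h₃, h₄⟩ := hb.blockIdx_spec hs ℓ
  have := (hb.strictMono hs).lt_iff_lt.1 (h₃.trans_lt h₂)
  have := (hb.strictMono hs).lt_iff_lt.1 (h₁.trans_lt h₄)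
  omega

theorem IsCutSeq.blockStart_le (hb : IsCutSeq s b) (hs : 0 < s) (ℓ : ℕ) :
    blockStart b ℓ ≤ ℓ :=
  (hb.blockIdx_spec hs ℓ).1

theorem IsCutSeq.le_blockStart_add (hb : IsCutSeq s b) (hs : 0 < s) (ℓ : ℕ) :
    ℓ ≤ blockStart b ℓ + s := by
  have := (hb.blockIdx_spec hs ℓ).2
  have := (hb.2 (blockIdx b ℓ)).2
  unfold blockStart
  omega

theorem IsCutSeq.blockIdx_of_lt (hb : IsCutSeq s b) (hs : 0 < s) {ℓ : ℕ} (h : ℓ < s) :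
    blockIdx b ℓ = 0 := by
  have := (hb.2 0).1
  rw [zero_add, hb.1] at this
  exact hb.blockIdx_eq hs (by simp [hb.1]) (by rw [zero_add]; omega)

/-- Blocks have length at least `s > t`, so levels at most `t` apart lie in the same or in
adjacent blocks. -/
theorem IsCutSeq.blockIdx_eq_of_mod_two_eq (hb : IsCutSeq s b) {t ℓ ℓ' : ℕ} (hts : t < s)
    (h₁ : ℓ ≤ ℓ' + t) (h₂ : ℓ' ≤ ℓ + t) (h : blockIdx b ℓ % 2 = blockIdx b ℓ' % 2) :
    blockIdx b ℓ = blockIdx b ℓ' := by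
  wlog hle : ℓ ≤ ℓ' generalizing ℓ ℓ'
  · exact (this h₂ h₁ h.symm (by omega)).symm
  have hs : 0 < s := by omega
  have hmono := hb.strictMono hs
  obtain ⟨h₃, h₄⟩ := hb.blockIdx_spec hs ℓ
  obtain ⟨h₅, h₆⟩ := hb.blockIdx_spec hs ℓ'
  have hlo := hmono.lt_iff_lt.1 (h₃.trans_lt (hle.trans_lt h₆))
  have hhi : blockIdx b ℓ' < blockIdx b ℓ + 2 := by
    by_contra! hge
    have := hmono.monotone (show blockIdx b ℓ + 1 + 1 ≤ blockIdx b ℓ' by omega)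
    have := (hb.2 (blockIdx b ℓ + 1)).1
    omega
  omega

def extendCuts (a : ℕ → ℕ) (n s : ℕ) (j : ℕ) : ℕ := if j ≤ n then a j else a n + (j - n) * s

variable {a : ℕ → ℕ} {n : ℕ}

theorem extendCuts_of_le {j : ℕ} (h : j ≤ n) : extendCuts a n s j = a j := if_pos h

theorem extendCuts_add (q : ℕ) : extendCuts a n s (n + q) = a n + q * s := by
  unfold extendCuts
  split_ifs with h
  · obtain rfl : q = 0 := by omega
    simp
  · simp

theorem isCutSeq_extendCuts (ha0 : a 0 = 0)
    (ha : ∀ j < n, a (j + 1) = a j + s ∨ a (j + 1) = a j + s + 1) :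
    IsCutSeq s (extendCuts a n s) := by
  refine ⟨by simp [extendCuts, ha0], fun j => ?_⟩
  rcases lt_or_ge j n with hj | hj
  · rw [extendCuts_of_le hj.le, extendCuts_of_le (show j + 1 ≤ n by omega)]
    rcases ha j hj with h | h <;> omega
  · obtain ⟨q, rfl⟩ := Nat.exists_eq_add_of_le hj
    rw [add_assoc, extendCuts_add, extendCuts_add]
    constructor <;> nlinarith

theorem blockIdx_extendCuts_of_le (hb : IsCutSeq s (extendCuts a n s)) (hs : 0 < s) {ℓ : ℕ}
    (h : a n ≤ ℓ) : blockIdx (extendCuts a n s) ℓ = n + (ℓ - a n) / s := by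
  apply hb.blockIdx_eq hs
  · rw [extendCuts_add]
    have := Nat.div_mul_le_self (ℓ - a n) s
    omega
  · rw [add_assoc, extendCuts_add, add_mul, one_mul]
    have := Nat.lt_div_mul_add (a := ℓ - a n) hs
    omega

theorem blockIdx_extendCuts_add (hb : IsCutSeq s (extendCuts a n s)) (hs : 0 < s) {ℓ q : ℕ}
    (han : a n = s * q) (h : a n ≤ ℓ) : blockIdx (extendCuts a n s) ℓ + q = n + ℓ / s := by
  rw [blockIdx_extendCuts_of_le hb hs h, han, Nat.sub_mul_div]
  have := (Nat.le_div_iff_mul_le hs).2 (show q * s ≤ ℓ by rw [mul_comm]; omega)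
  omega

theorem blockIdx_extendCuts_of_lt (hb : IsCutSeq s (extendCuts a n s)) (hs : 0 < s) {ℓ : ℕ}
    (h : ℓ < a n) :
    blockIdx (extendCuts a n s) ℓ < n ∧ a (blockIdx (extendCuts a n s) ℓ) ≤ ℓ ∧
      ℓ < a (blockIdx (extendCuts a n s) ℓ + 1) := by
  obtain ⟨h₁, h₂⟩ := hb.blockIdx_spec hs ℓ
  set j := blockIdx (extendCuts a n s) ℓ
  have hjn : j < n := by
    by_contra! hnj
    have := (hb.strictMono hs).monotone hnj
    rw [extendCuts_of_le le_rfl] at this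
    omega
  rw [extendCuts_of_le hjn.le] at h₁
  rw [extendCuts_of_le hjn] at h₂
  exact ⟨hjn, h₁, h₂⟩

end Blocks

theorem iterate_sub_eq_iterate_sub {X : Type*} (f : X → X) (x : X) {m n p : ℕ}
    (h : p + n ≤ m) : f^[m - n] x = f^[m - p - n] (f^[p] x) := by
  rw [← iterate_add_apply]
  congr 1
  omega

section BlockColoring

variable {X : Type*}

def anchor (f : X → X) (k : X → ℕ) (x : X) : X := f^[k x] x

theorem iterate_eq_iterate_anchor {f : X → X} {k : X → ℕ} {x : X} {p : ℕ} (h : k x ≤ p) :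
    f^[p] x = f^[p - k x] (anchor f k x) := by
  rw [anchor, ← iterate_add_apply, Nat.sub_add_cancel h]

/-- The colour of `x` depends only on its level and on the colour `e` of its anchor: the levels
are cut into the blocks of `cuts e`, coloured alternately, starting with `e`. -/
structure IsBlockColoring (f : X → X) (k c : X → ℕ) (s : ℕ) (cuts : ℕ → ℕ → ℕ) : Prop where
  level_apply : ∀ x, 1 < k x → k (f x) = k x - 1
  two_mul_le_level_anchor : ∀ x, 2 * s ≤ k (anchor f k x)
  isCutSeq : ∀ e, IsCutSeq s (cuts e)
  color_le_one : ∀ x, c x ≤ 1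
  color_eq : ∀ x, c x = (blockIdx (cuts (c (anchor f k x))) (k x) + c (anchor f k x)) % 2

def blockStartAt (f : X → X) (k c : X → ℕ) (cuts : ℕ → ℕ → ℕ) (x : X) : ℕ :=
  blockStart (cuts (c (anchor f k x))) (k x)

/-- The point `t` levels below the start of the block of `x`; by truncated subtraction this is
the anchor of `x` when the block starts at level at most `t`. -/
def blockRep (f : X → X) (k c : X → ℕ) (cuts : ℕ → ℕ → ℕ) (t : ℕ) (x : X) : X :=
  f^[k x - (blockStartAt f k c cuts x - t)] x

def collapse (f : X → X) (k c : X → ℕ) (cuts : ℕ → ℕ → ℕ) (t : ℕ) (x : X) : X :=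
  if t < blockStartAt f k c cuts x then blockRep f k c cuts t x
  else blockRep f k c cuts t (anchor f k x)

namespace IsBlockColoring

variable {f : X → X} {k c : X → ℕ} {s t : ℕ} {cuts : ℕ → ℕ → ℕ} {x y : X}

theorem level_iterate (hB : IsBlockColoring f k c s cuts) {j : ℕ} (hj : j < k x) :
    k (f^[j] x) = k x - j := by
  induction j with
  | zero => rfl
  | succ j ih =>
    rw [iterate_succ_apply', hB.level_apply _ (by rw [ih (by omega)]; omega), ih (by omega)]
    omega

theorem anchor_iterate (hB : IsBlockColoring f k c s cuts) {j : ℕ} (hj : j < k x) :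
    anchor f k (f^[j] x) = anchor f k x := by
  rw [anchor, hB.level_iterate hj, ← iterate_add_apply, Nat.sub_add_cancel hj.le, anchor]

theorem blockStartAt_le (hB : IsBlockColoring f k c s cuts) (hs : 0 < s) (x : X) :
    blockStartAt f k c cuts x ≤ k x :=
  (hB.isCutSeq _).blockStart_le hs _

theorem le_blockStartAt_add (hB : IsBlockColoring f k c s cuts) (hs : 0 < s) (x : X) :
    k x ≤ blockStartAt f k c cuts x + s :=
  (hB.isCutSeq _).le_blockStart_add hs _

theorem lt_blockStartAt_anchor (hB : IsBlockColoring f k c s cuts) (hts : t < s) (x : X) :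
    t < blockStartAt f k c cuts (anchor f k x) := by
  have := hB.two_mul_le_level_anchor x
  have := hB.le_blockStartAt_add (by omega) (anchor f k x)
  omega

theorem color_anchor (hB : IsBlockColoring f k c s cuts) (hx : k x < s) :
    c (anchor f k x) = c x := by
  have := hB.color_le_one (anchor f k x)
  rw [hB.color_eq x, (hB.isCutSeq _).blockIdx_of_lt (by omega) hx, zero_add,
    Nat.mod_eq_of_lt (by omega)]

theorem collapse_anchor (hB : IsBlockColoring f k c s cuts) (hts : t < s) (hx : k x ≤ t) :
    collapse f k c cuts t (anchor f k x) = collapse f k c cuts t x := by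
  have := hB.blockStartAt_le (by omega) x
  unfold collapse
  rw [if_pos (hB.lt_blockStartAt_anchor hts x), if_neg (by omega)]

/-- Two same-coloured points that meet before reaching their anchor have the same anchor and
levels at most `t` apart, hence lie in the same block. -/
theorem collapse_eq_of_iterate_eq_of_lt (hB : IsBlockColoring f k c s cuts) (hts : t < s)
    {p q : ℕ} (hc : c x = c y) (hpq : p + q ≤ t) (hp : p < k x) (hq : q < k y)
    (h : f^[p] x = f^[q] y) : collapse f k c cuts t x = collapse f k c cuts t y := by
  have hanchor : anchor f k x = anchor f k y := by
    rw [← hB.anchor_iterate hp, h, hB.anchor_iterate hq]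
  have hlevel : k x - p = k y - q := by
    rw [← hB.level_iterate hp, ← hB.level_iterate hq, h]
  have hstart : blockStartAt f k c cuts x = blockStartAt f k c cuts y := by
    have hx := hB.color_eq x
    have hy := hB.color_eq y
    unfold blockStartAt blockStart
    rw [← hanchor] at hy ⊢
    congr 1
    exact (hB.isCutSeq _).blockIdx_eq_of_mod_two_eq hts (by omega) (by omega) (by omega)
  have hBx := hB.blockStartAt_le (by omega) x
  unfold collapse
  rw [← hstart, ← hanchor]
  split_ifs
  · unfold blockRep
    rw [← hstart, iterate_sub_eq_iterate_sub f x (p := p) (by omega),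
      iterate_sub_eq_iterate_sub f y (p := q) (by omega), h, hlevel]
  · rfl

theorem collapse_eq_of_iterate_eq_of_lt_right (hB : IsBlockColoring f k c s cuts) (hts : t < s)
    {p q : ℕ} (hc : c x = c y) (hpq : p + q ≤ t) (hq : q < k y) (h : f^[p] x = f^[q] y) :
    collapse f k c cuts t x = collapse f k c cuts t y := by
  by_cases hp : p < k x
  · exact hB.collapse_eq_of_iterate_eq_of_lt hts hc hpq hp hq h
  have := hB.two_mul_le_level_anchor x
  rw [← hB.collapse_anchor hts (by omega)]
  exact hB.collapse_eq_of_iterate_eq_of_lt hts ((hB.color_anchor (by omega)).trans hc)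
    (by omega) (by omega) hq ((iterate_eq_iterate_anchor (not_lt.1 hp)).symm.trans h)

theorem collapse_eq_of_iterate_eq (hB : IsBlockColoring f k c s cuts) (hts : t < s)
    {p q : ℕ} (hc : c x = c y) (hpq : p + q ≤ t) (h : f^[p] x = f^[q] y) :
    collapse f k c cuts t x = collapse f k c cuts t y := by
  by_cases hq : q < k y
  · exact hB.collapse_eq_of_iterate_eq_of_lt_right hts hc hpq hq h
  have := hB.two_mul_le_level_anchor y
  rw [← hB.collapse_anchor hts (x := y) (by omega)]
  exact hB.collapse_eq_of_iterate_eq_of_lt_right hts (hc.trans (hB.color_anchor (by omega)).symm)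
    (by omega) (by omega) (h.trans (iterate_eq_iterate_anchor (not_lt.1 hq)))

theorem collapse_eq_iterate (hB : IsBlockColoring f k c s cuts) (hts : t < s) (x : X) :
    ∃ n ≤ 2 * s + 2 * t, collapse f k c cuts t x = f^[n] x := by
  have h₁ := hB.blockStartAt_le (by omega) x
  have h₂ := hB.le_blockStartAt_add (by omega) x
  have h₃ := hB.le_blockStartAt_add (by omega) (anchor f k x)
  unfold collapse blockRep
  split_ifs
  · exact ⟨_, by omega, rfl⟩
  · exact ⟨_ + k x, by omega, (iterate_add_apply f _ _ x).symm⟩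

end IsBlockColoring

end BlockColoring

section FirstHit

variable {X : Type*} {f : X → X} {H : Set X} {k : X → ℕ}

theorem level_apply_of_firstHit
    (hk : ∀ x, 1 ≤ k x ∧ f^[k x] x ∈ H ∧ ∀ j, 1 ≤ j → j < k x → f^[j] x ∉ H) {x : X}
    (hx : 1 < k x) : k (f x) = k x - 1 := by
  obtain ⟨-, -, hxfirst⟩ := hk x
  obtain ⟨-, hfxH, hfxfirst⟩ := hk (f x)
  have hxH : f^[k x - 1] (f x) ∈ H := by
    rw [← iterate_succ_apply, Nat.succ_eq_add_one, Nat.sub_add_cancel hx.le]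
    exact (hk x).2.1
  have h₁ : ¬k (f x) + 1 < k x := fun h => hxfirst _ (by omega) h hfxH
  have h₂ : ¬k x - 1 < k (f x) := fun h => hfxfirst _ (by omega) h hxH
  omega

theorem lt_level_anchor_of_fwdIndep {r : ℕ}
    (hk : ∀ x, 1 ≤ k x ∧ f^[k x] x ∈ H ∧ ∀ j, 1 ≤ j → j < k x → f^[j] x ∉ H)
    (hInd : FwdIndep f r H) (x : X) : r < k (anchor f k x) :=
  hInd _ (hk x).2.1 _ (hk _).1 (hk _).2.1

/-- Below level `r / 2` the blocks of a point with an anchor of colour `1` are the intervals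
`[a i, a (i + 1))`; all other blocks have length `s`. -/
theorem isBlockColoring_of_firstHit {c : X → ℕ} {s r m : ℕ} {a : ℕ → ℕ} (hs : 0 < s)
    (hrr : r = 4 * s ^ 2)
    (hk : ∀ x, 1 ≤ k x ∧ f^[k x] x ∈ H ∧ ∀ j, 1 ≤ j → j < k x → f^[j] x ∉ H)
    (hInd : FwdIndep f r H) (ha0 : a 0 = 0) (haTop : a (2 * m + 1) = r / 2)
    (hsize : ∀ i ≤ 2 * m, a (i + 1) = a i + s ∨ a (i + 1) = a i + s + 1)
    (hc01 : ∀ x, c x = 0 ∨ c x = 1)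
    (hcBig : ∀ x, r / 2 ≤ k x → c x = (k x / s) % 2)
    (hcT0 : ∀ x, k x < r / 2 → c (f^[k x] x) = 0 → c x = (k x / s) % 2)
    (hcT1 : ∀ x, k x < r / 2 → c (f^[k x] x) = 1 →
      ∀ i ≤ 2 * m, a i ≤ k x → k x < a (i + 1) → c x = (i + 1) % 2) :
    IsBlockColoring f k c s (fun e => extendCuts a (if e = 0 then 0 else 2 * m + 1) s) := by
  have hcuts : ∀ n ≤ 2 * m + 1, IsCutSeq s (extendCuts a n s) :=
    fun n hn => isCutSeq_extendCuts ha0 fun j hj => hsize j (by omega)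
  refine ⟨fun x => level_apply_of_firstHit hk, fun x => ?_,
    fun e => hcuts _ (by split_ifs <;> omega), fun x => by have := hc01 x; omega, fun x => ?_⟩
  · have := lt_level_anchor_of_fwdIndep hk hInd x
    nlinarith
  rcases hc01 (anchor f k x) with he | he <;> simp only [he, if_true, one_ne_zero, if_false]
  · have := blockIdx_extendCuts_add (hcuts 0 (by omega)) hs (q := 0) (by simp [ha0])
      (show a 0 ≤ k x by omega)
    by_cases hbig : r / 2 ≤ k x
    · rw [hcBig x hbig]; omega
    · rw [hcT0 x (by omega) he]; omega
  · by_cases hbig : r / 2 ≤ k x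
    · have := blockIdx_extendCuts_add (hcuts _ le_rfl) hs (ℓ := k x) (q := 2 * s)
        (by rw [haTop, hrr]; ring_nf; omega) (by omega)
      rw [hcBig x hbig]; omega
    · obtain ⟨hj, hlo, hhi⟩ := blockIdx_extendCuts_of_lt (hcuts _ le_rfl) hs (ℓ := k x) (by omega)
      exact hcT1 x (by omega) he _ (by omega) hlo hhi

end FirstHit

theorem stmt12_general {X : Type*} (f : X → X) (hf : Acyclic f) (t : ℕ) (ht : 1 ≤ t)
    (s r : ℕ) (hs : s = 6*t) (hrr : r = 4*s^2)
    (H : Set X) (hInd : FwdIndep f r H)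
    (k : X → ℕ)
    (hk : ∀ x, 1 ≤ k x ∧ f^[k x] x ∈ H ∧ ∀ j, 1 ≤ j → j < k x → f^[j] x ∉ H)
    (m : ℕ) (a : ℕ → ℕ) (ha0 : a 0 = 0) (haTop : a (2*m+1) = r/2)
    (hsize : ∀ i ≤ 2*m, a (i+1) = a i + s ∨ a (i+1) = a i + s + 1)
    (c : X → ℕ) (hc01 : ∀ x, c x = 0 ∨ c x = 1)
    (hcBig : ∀ x, r/2 ≤ k x → c x = (k x / s) % 2)
    (hcT0 : ∀ x, k x < r/2 → c (f^[k x] x) = 0 → c x = (k x / s) % 2)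
    (hcT1 : ∀ x, k x < r/2 → c (f^[k x] x) = 1 →
      ∀ i ≤ 2*m, a i ≤ k x → k x < a (i+1) → c x = (i+1) % 2) :
    ({x | c x = 0} ∪ {x | c x = 1}) = Set.univ ∧
    ∀ i ≤ 1, ∀ y z : X, Relation.EqvGen (classRel f t {x | c x = i}) y z →
      distLE f (28*t+7) y z := by
  have hts : t < s := by omega
  have hB := isBlockColoring_of_firstHit (by omega) hrr hk hInd ha0 haTop hsize hc01 hcBig hcT0 hcT1
  refine ⟨Set.ext fun x => by simpa using hc01 x, fun i _ y z hyz => ?_⟩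
  have h := distLE_of_eqvGen_classRel (fun x => hf x 1 le_rfl) _ (hB.collapse_eq_iterate hts)
    (fun x hx y hy _ _ hpq => hB.collapse_eq_of_iterate_eq hts (Eq.trans hx hy.symm) hpq) hyz
  exact ⟨h.1, h.2.trans (by omega)⟩

theorem stmt12 {X : Type*} (f : X → X) (hf : Acyclic f) (t : ℕ) (ht : 1 ≤ t)
    (s r : ℕ) (hs : s = 6*t) (hrr : r = 4*s^2)
    (H : Set X) (hHit : Hitting f H) (hInd : FwdIndep f r H)
    (k : X → ℕ)
    (hk : ∀ x, 1 ≤ k x ∧ f^[k x] x ∈ H ∧ ∀ j, 1 ≤ j → j < k x → f^[j] x ∉ H)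
    (m : ℕ) (a : ℕ → ℕ) (ha0 : a 0 = 0) (haTop : a (2*m+1) = r/2)
    (hsize : ∀ i ≤ 2*m, a (i+1) = a i + s ∨ a (i+1) = a i + s + 1)
    (c : X → ℕ) (hc01 : ∀ x, c x = 0 ∨ c x = 1)
    (hcBig : ∀ x, r/2 ≤ k x → c x = (k x / s) % 2)
    (hcT0 : ∀ x, k x < r/2 → c (f^[k x] x) = 0 → c x = (k x / s) % 2)
    (hcT1 : ∀ x, k x < r/2 → c (f^[k x] x) = 1 →
      ∀ i ≤ 2*m, a i ≤ k x → k x < a (i+1) → c x = (i+1) % 2) :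
    ({x | c x = 0} ∪ {x | c x = 1}) = Set.univ ∧
    ∀ i ≤ 1, ∀ y z : X, Relation.EqvGen (classRel f t {x | c x = i}) y z →
      distLE f (28*t+7) y z :=
  stmt12_general f hf t ht s r hs hrr H hInd k hk m a ha0 haTop hsize c hc01 hcBig hcT0 hcT1
end

section
/- Suppose ψ : [ℕ]^ℕ → V(H) is a Borel map from the space of infinite subsets of ℕ into the vertex set of a finite digraph H such that (ψ(y), ψ(S(y))) is an edge of H for every y, where S is the shift map. Then H contains a loop, i.e., an edge (v, v). -/
set_option linter.unusedVariables false

/-!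
Borel sets of infinite subsets of `ℕ` are completely Ramsey (Galvin–Prikry): the completely
Ramsey sets form a σ-algebra containing the sets `{x | x n ∈ S}`. For a countable union, a fusion
(diagonal) argument makes membership in each piece depend on a finite initial segment only, which
reduces the union to a set open in the product topology; open sets are handled by deciding, stem
by stem, whether a stem is accepted or rejected. Applied to the fibres of `ψ`, this gives an
infinite `B` on whose infinite subsets `ψ` is constant. If `y` enumerates `B`, then `S y`
enumerates a subset of `B`, so `ψ y = ψ (S y)` carries a loop.
-/

namespace GalvinPrikry

abbrev IncSeq : Type := {x : ℕ → ℕ // StrictMono x}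

def initSeg (x : IncSeq) (n : ℕ) : Finset ℕ := (Finset.range n).image x.1

def tail (t : Finset ℕ) (A : Set ℕ) : Set ℕ := {a ∈ A | ∀ m ∈ t, m < a}

/-- The Ellentuck neighbourhood `[s, A]`. No condition `s < A` is imposed: the terms of `x` after
the initial segment `s` lie above `s` anyway. -/
def cyl (s : Finset ℕ) (A : Set ℕ) : Set IncSeq :=
  {x | initSeg x s.card = s ∧ ∀ i, s.card ≤ i → x.1 i ∈ A}

theorem card_initSeg (x : IncSeq) (n : ℕ) : (initSeg x n).card = n := by
  rw [initSeg, Finset.card_image_of_injective _ x.2.injective, Finset.card_range]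

theorem initSeg_succ (x : IncSeq) (n : ℕ) :
    initSeg x (n + 1) = insert (x.1 n) (initSeg x n) := by
  rw [initSeg, Finset.range_add_one, Finset.image_insert]
  rfl

theorem mem_initSeg {x : IncSeq} {n m : ℕ} : m ∈ initSeg x n ↔ ∃ i < n, x.1 i = m := by
  simp [initSeg]

theorem initSeg_mono (x : IncSeq) {m n : ℕ} (h : m ≤ n) : initSeg x m ⊆ initSeg x n :=
  Finset.image_subset_image (Finset.range_subset_range.2 h)

theorem initSeg_congr {x y : IncSeq} {n : ℕ} (h : ∀ i < n, x.1 i = y.1 i) :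
    initSeg x n = initSeg y n :=
  Finset.image_congr fun i hi => h i (Finset.mem_range.1 hi)

theorem eq_of_initSeg_eq {x y : IncSeq} {n : ℕ} (h : initSeg x n = initSeg y n) {i : ℕ}
    (hi : i < n) : x.1 i = y.1 i := by
  have hrange : ∀ z : IncSeq, Set.range (z.1 ∘ Fin.val : Fin n → ℕ) = initSeg z n := by
    intro z
    ext m
    simp [initSeg, Fin.exists_iff]
  have := ((x.2.comp Fin.val_strictMono).range_inj (y.2.comp Fin.val_strictMono)).1
    (by rw [hrange, hrange, h])
  exact congrFun this ⟨i, hi⟩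

theorem exists_initSeg_of_subset_range (x : IncSeq) {t : Finset ℕ} (ht : ↑t ⊆ Set.range x.1) :
    ∃ k, t ⊆ initSeg x k ∧ ∀ j, (∀ m ∈ t, m < x.1 j) → k ≤ j := by
  classical
  have hinv : ∀ m ∈ t, x.1 (Function.invFun x.1 m) = m := fun m hm =>
    Function.invFun_eq (ht hm)
  refine ⟨t.sup fun m => Function.invFun x.1 m + 1, fun m hm => ?_, fun j hj => ?_⟩
  · exact mem_initSeg.2
      ⟨_, Nat.lt_of_succ_le (Finset.le_sup (f := fun m => _ + 1) hm), hinv m hm⟩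
  · refine Finset.sup_le fun m hm => x.2.lt_iff_lt.1 ?_
    rw [hinv m hm]
    exact hj m hm

theorem tail_subset (t : Finset ℕ) (A : Set ℕ) : tail t A ⊆ A := fun _ ha => ha.1

theorem tail_mono {t t' : Finset ℕ} {A A' : Set ℕ} (ht : t ⊆ t') (hA : A ⊆ A') :
    tail t' A ⊆ tail t A' := fun a ha => ⟨hA ha.1, fun m hm => ha.2 m (ht hm)⟩

theorem infinite_tail {A : Set ℕ} (hA : A.Infinite) (t : Finset ℕ) : (tail t A).Infinite := by
  refine (hA.sdiff (Set.finite_Iic (t.sup id))).mono fun a ha => ⟨ha.1, fun m hm => ?_⟩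
  exact lt_of_le_of_lt (Finset.le_sup (f := id) hm) (not_le.1 ha.2)

section cyl

variable {s : Finset ℕ} {A B : Set ℕ} {x : IncSeq}

theorem cyl_mono (h : A ⊆ B) : cyl s A ⊆ cyl s B :=
  fun _ hx => ⟨hx.1, fun i hi => h (hx.2 i hi)⟩

theorem mem_cyl_empty : x ∈ cyl ∅ A ↔ Set.range x.1 ⊆ A := by
  simp [cyl, initSeg, Set.range_subset_iff]

theorem cyl_subset_cyl_tail : cyl s A ⊆ cyl s (tail s A) := by
  intro x hx
  refine ⟨hx.1, fun i hi => ⟨hx.2 i hi, fun m hm => ?_⟩⟩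
  rw [← hx.1, mem_initSeg] at hm
  obtain ⟨j, hj, rfl⟩ := hm
  exact x.2 (lt_of_lt_of_le hj hi)

theorem subset_initSeg_of_mem_cyl (hx : x ∈ cyl s A) {m : ℕ} (hm : s.card ≤ m) :
    s ⊆ initSeg x m :=
  hx.1 ▸ initSeg_mono x hm

theorem mem_cyl_initSeg (hx : x ∈ cyl s A) {m : ℕ} (hm : s.card ≤ m) :
    x ∈ cyl (initSeg x m) A := by
  refine ⟨by rw [card_initSeg], fun i hi => hx.2 i ?_⟩
  rw [card_initSeg] at hi
  omega

theorem initSeg_sdiff_subset_of_mem_cyl (hx : x ∈ cyl s A) (m : ℕ) :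
    ↑(initSeg x m \ s) ⊆ A := by
  intro a ha
  obtain ⟨ha, has⟩ := Finset.mem_sdiff.1 ha
  obtain ⟨i, -, rfl⟩ := mem_initSeg.1 ha
  refine hx.2 i (not_lt.1 fun hi => has ?_)
  rw [← hx.1]
  exact mem_initSeg.2 ⟨i, hi, rfl⟩

end cyl

def Decides (X : Set IncSeq) (s : Finset ℕ) (A : Set ℕ) : Prop :=
  cyl s A ⊆ X ∨ Disjoint (cyl s A) X

section Decides

variable {X : Set IncSeq} {s t : Finset ℕ} {A B : Set ℕ}

theorem Decides.mono (h : Decides X s A) (hBA : B ⊆ A) : Decides X s B :=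
  h.imp (fun h => (cyl_mono hBA).trans h) fun h => h.mono_left (cyl_mono hBA)

theorem Decides.of_tail (h : Decides X s (tail t A)) (hts : t ⊆ s) : Decides X s A := by
  rcases h.mono (tail_mono hts subset_rfl) with h | h
  · exact Or.inl (cyl_subset_cyl_tail.trans h)
  · exact Or.inr (h.mono_left cyl_subset_cyl_tail)

theorem Decides.compl (h : Decides X s A) : Decides Xᶜ s A :=
  h.symm.imp Set.subset_compl_iff_disjoint_right.2 Set.disjoint_compl_right_iff_subset.2

end Decides

def IsCompletelyRamsey (X : Set IncSeq) : Prop :=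
  ∀ s A, A.Infinite → ∃ B ⊆ A, B.Infinite ∧ Decides X s B

theorem exists_subset_forall_finset {ι : Type*} (P : ι → Set ℕ → Prop)
    (hP : ∀ i ⦃C C' : Set ℕ⦄, C' ⊆ C → P i C → P i C') (T : Finset ι) {A : Set ℕ}
    (hdense : ∀ i ∈ T, ∀ C ⊆ A, C.Infinite → ∃ C' ⊆ C, C'.Infinite ∧ P i C')
    (hA : A.Infinite) : ∃ B ⊆ A, B.Infinite ∧ ∀ i ∈ T, P i B := by
  classical
  induction T using Finset.induction_on with
  | empty => exact ⟨A, subset_rfl, hA, by simp⟩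
  | insert i T _ ih =>
    obtain ⟨B, hBA, hB, hPB⟩ := ih fun j hj => hdense j (Finset.mem_insert_of_mem hj)
    obtain ⟨C, hCB, hC, hPC⟩ := hdense i (Finset.mem_insert_self i T) B hBA hB
    exact ⟨C, hCB.trans hBA, hC, Finset.forall_mem_insert _ _ _ |>.2
      ⟨hPC, fun j hj => hP j hCB (hPB j hj)⟩⟩

theorem exists_fusion (P : Finset ℕ → Set ℕ → Prop)
    (hP : ∀ t ⦃C C' : Set ℕ⦄, C' ⊆ C → P t C → P t C') {A : Set ℕ}
    (hdense : ∀ t, ∀ C ⊆ A, C.Infinite → ∃ C' ⊆ C, C'.Infinite ∧ P t C')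
    (hA : A.Infinite) :
    ∃ B ⊆ A, B.Infinite ∧ ∀ t : Finset ℕ, ↑t ⊆ B → P t (tail t B) := by
  classical
  have hstep : ∀ (F : Finset ℕ) (C : Set ℕ), ∃ D,
      C ⊆ A → C.Infinite → D ⊆ C ∧ D.Infinite ∧ ∀ t ⊆ F, P t D := by
    intro F C
    by_cases hC : C ⊆ A ∧ C.Infinite
    · obtain ⟨D, hDC, hD, hPD⟩ := exists_subset_forall_finset P hP F.powerset
        (fun t _ C' hC' => hdense t C' (hC'.trans hC.1)) hC.2
      exact ⟨D, fun _ _ => ⟨hDC, hD, fun t ht => hPD t (Finset.mem_powerset.2 ht)⟩⟩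
    · exact ⟨C, fun h₁ h₂ => absurd ⟨h₁, h₂⟩ hC⟩
  choose shrink hshrink using hstep
  -- stage `k` holds the chosen points `b 0, …, b (k-1)` and the current reservoir
  let next : Finset ℕ × Set ℕ → Finset ℕ × Set ℕ := fun p =>
    (insert (sInf (shrink p.1 p.2)) p.1, tail {sInf (shrink p.1 p.2)} (shrink p.1 p.2))
  let stage : ℕ → Finset ℕ × Set ℕ := fun k => next^[k] (∅, A)
  let D : ℕ → Set ℕ := fun k => shrink (stage k).1 (stage k).2
  let b : ℕ → ℕ := fun k => sInf (D k)
  have hstage_succ : ∀ k, stage (k + 1) = (insert (b k) (stage k).1, tail {b k} (D k)) :=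
    fun k => Function.iterate_succ_apply' next k (∅, A)
  have hstageA : ∀ k, (stage k).2 ⊆ A ∧ (stage k).2.Infinite := by
    intro k
    induction k with
    | zero => exact ⟨subset_rfl, hA⟩
    | succ k ih =>
      obtain ⟨hDk, hDinf, -⟩ := hshrink _ _ ih.1 ih.2
      rw [hstage_succ]
      exact ⟨(tail_subset _ _).trans (hDk.trans ih.1), infinite_tail hDinf _⟩
  have hD : ∀ k, D k ⊆ (stage k).2 ∧ (D k).Infinite ∧ ∀ t ⊆ (stage k).1, P t (D k) :=
    fun k => hshrink _ _ (hstageA k).1 (hstageA k).2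
  have hbD : ∀ k, b k ∈ D k := fun k => Nat.sInf_mem (hD k).2.1.nonempty
  have hD_succ : ∀ k, D (k + 1) ⊆ tail {b k} (D k) := fun k => by
    simpa only [hstage_succ] using (hD (k + 1)).1
  have hb : StrictMono b := strictMono_nat_of_lt_succ fun k =>
    (hD_succ k (hbD (k + 1))).2 (b k) (Finset.mem_singleton_self _)
  let e : IncSeq := ⟨b, hb⟩
  have hstage_fst : ∀ k, (stage k).1 = initSeg e k := by
    intro k
    induction k with
    | zero => rfl
    | succ k ih => rw [hstage_succ, initSeg_succ, ih]
  have hD_anti : Antitone D := antitone_nat_of_succ_le fun k =>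
    (hD_succ k).trans (tail_subset _ _)
  refine ⟨Set.range b, Set.range_subset_iff.2 fun k => (hD k).1.trans (hstageA k).1 (hbD k),
    Set.infinite_range_of_injective hb.injective, fun t ht => ?_⟩
  obtain ⟨k, htk, hk⟩ := exists_initSeg_of_subset_range e ht
  refine hP t (fun a ha => ?_) ((hD k).2.2 t (hstage_fst k ▸ htk))
  obtain ⟨⟨j, rfl⟩, hj⟩ := ha
  exact hD_anti (hk j hj) (hbD j)

def Accepts (X : Set IncSeq) (s : Finset ℕ) (A : Set ℕ) : Prop := cyl s A ⊆ X

def Rejects (X : Set IncSeq) (s : Finset ℕ) (A : Set ℕ) : Prop :=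
  ∀ B ⊆ A, B.Infinite → ¬ Accepts X s B

section AcceptsRejects

variable {X : Set IncSeq} {s t : Finset ℕ} {A B : Set ℕ}

theorem Accepts.mono (h : Accepts X s A) (hBA : B ⊆ A) : Accepts X s B :=
  (cyl_mono hBA).trans h

theorem Rejects.mono (h : Rejects X s A) (hBA : B ⊆ A) : Rejects X s B :=
  fun C hCB => h C (hCB.trans hBA)

theorem Accepts.of_tail (h : Accepts X s (tail t A)) (hts : t ⊆ s) : Accepts X s A :=
  cyl_subset_cyl_tail.trans (h.mono (tail_mono hts subset_rfl))

theorem Rejects.of_tail (h : Rejects X s (tail t A)) (hts : t ⊆ s) : Rejects X s A :=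
  fun C hCA hC hacc => h (tail s C) (tail_mono hts hCA) (infinite_tail hC s)
    (hacc.mono (tail_subset s C))

/-- If every `n` from an infinite set were accepted as the next element after `s`, that set
would accept `s`. -/
theorem Rejects.finite_setOf_accepts_insert (h : Rejects X s A) :
    {n ∈ A | Accepts X (insert n s) A}.Finite := by
  by_contra hN
  refine h _ (fun n hn => hn.1) hN fun y hy => ?_
  have hy' : y ∈ cyl (insert (y.1 s.card) s) {n ∈ A | Accepts X (insert n s) A} := by
    have := mem_cyl_initSeg hy (Nat.le_succ s.card)
    rwa [initSeg_succ, hy.1] at this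
  exact (hy.2 s.card le_rfl).2 (cyl_mono (fun n hn => hn.1) hy')

end AcceptsRejects

theorem exists_subset_accepts_or_rejects (X : Set IncSeq) (s : Finset ℕ) {A : Set ℕ}
    (hA : A.Infinite) : ∃ B ⊆ A, B.Infinite ∧
      ∀ u : Finset ℕ, ↑u ⊆ B → Accepts X (s ∪ u) B ∨ Rejects X (s ∪ u) B := by
  obtain ⟨B, hBA, hB, hdec⟩ := exists_fusion
    (fun u C => Accepts X (s ∪ u) C ∨ Rejects X (s ∪ u) C)
    (fun _ _ _ h => Or.imp (·.mono h) (·.mono h))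
    (fun u C _ hC => by
      by_cases h : ∃ C' ⊆ C, C'.Infinite ∧ Accepts X (s ∪ u) C'
      · obtain ⟨C', hC'C, hC', hacc⟩ := h
        exact ⟨C', hC'C, hC', Or.inl hacc⟩
      · push Not at h
        exact ⟨C, subset_rfl, hC, Or.inr h⟩) hA
  exact ⟨B, hBA, hB, fun u hu => (hdec u hu).imp (·.of_tail Finset.subset_union_right)
    (·.of_tail Finset.subset_union_right)⟩

theorem exists_subset_forall_rejects {X : Set IncSeq} {s : Finset ℕ} {B : Set ℕ}
    (hB : B.Infinite)
    (hdec : ∀ u : Finset ℕ, ↑u ⊆ B → Accepts X (s ∪ u) B ∨ Rejects X (s ∪ u) B)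
    (hs : Rejects X s B) :
    ∃ C ⊆ B, C.Infinite ∧ ∀ u : Finset ℕ, ↑u ⊆ C → Rejects X (s ∪ u) B := by
  classical
  obtain ⟨C, hCB, hC, hnext⟩ := exists_fusion
    (fun t C =>
      ↑t ⊆ B → Rejects X (s ∪ t) B → ∀ n ∈ C, Rejects X (s ∪ insert n t) B)
    (fun _ _ _ h hP ht hrej n hn => hP ht hrej n (h hn))
    (fun t C hCB hC => by
      by_cases ht : ↑t ⊆ B ∧ Rejects X (s ∪ t) B
      · refine ⟨C \ {n ∈ B | Accepts X (insert n (s ∪ t)) B}, Set.sdiff_subset,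
          hC.sdiff ht.2.finite_setOf_accepts_insert, fun _ _ n hn => ?_⟩
        have hnB : n ∈ B := hCB hn.1
        refine (hdec (insert n t) ?_).resolve_left fun hacc => hn.2 ⟨hnB, ?_⟩
        · rw [Finset.coe_insert]
          exact Set.insert_subset hnB ht.1
        · rwa [Finset.union_insert] at hacc
      · exact ⟨C, subset_rfl, hC, fun h₁ h₂ => absurd ⟨h₁, h₂⟩ ht⟩) hB
  refine ⟨C, hCB, hC, fun u hu => ?_⟩
  induction u using Finset.induction_on_max with
  | empty => simpa using hs
  | insert n t hlt ih =>
    rw [Finset.coe_insert, Set.insert_subset_iff] at hu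
    exact hnext t hu.2 (hu.2.trans hCB) (ih hu.2) n ⟨hu.1, hlt⟩

def IsPrefixOpen (O : Set IncSeq) : Prop :=
  ∀ x ∈ O, ∃ n, ∀ y : IncSeq, (∀ i < n, y.1 i = x.1 i) → y ∈ O

theorem IsPrefixOpen.isCompletelyRamsey {O : Set IncSeq} (hO : IsPrefixOpen O) :
    IsCompletelyRamsey O := by
  intro s A hA
  obtain ⟨B, hBA, hB, hdec⟩ := exists_subset_accepts_or_rejects O s hA
  rcases (by simpa using hdec ∅ (by simp)) with hacc | hrej
  · exact ⟨B, hBA, hB, Or.inl hacc⟩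
  obtain ⟨C, hCB, hC, hrejC⟩ := exists_subset_forall_rejects hB hdec hrej
  refine ⟨C, hCB.trans hBA, hC, Or.inr (Set.disjoint_left.2 fun x hx hxO => ?_)⟩
  obtain ⟨n, hn⟩ := hO x hxO
  have hrejx := hrejC _ (initSeg_sdiff_subset_of_mem_cyl hx (max n s.card))
  rw [Finset.union_sdiff_of_subset (subset_initSeg_of_mem_cyl hx (le_max_right n s.card))]
    at hrejx
  refine hrejx B subset_rfl hB fun y hy => hn y fun i hi => eq_of_initSeg_eq ?_
    (lt_of_lt_of_le hi (le_max_left n s.card))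
  have := hy.1
  rwa [card_initSeg] at this

theorem isCompletelyRamsey_setOf_apply_mem (n : ℕ) (S : Set ℕ) :
    IsCompletelyRamsey {x : IncSeq | x.1 n ∈ S} := by
  intro s A hA
  rcases lt_or_ge n s.card with hn | hn
  · refine ⟨A, subset_rfl, hA, ?_⟩
    by_cases h : ∃ x ∈ cyl s A, x.1 n ∈ S
    · obtain ⟨x, hx, hxS⟩ := h
      refine Or.inl fun y hy => ?_
      show y.1 n ∈ S
      rw [← eq_of_initSeg_eq (hx.1.trans hy.1.symm) hn]
      exact hxS
    · push Not at h
      exact Or.inr (Set.disjoint_left.2 h)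
  · rcases Set.infinite_union.1 ((Set.inter_union_sdiff A S).symm ▸ hA) with h | h
    · exact ⟨A ∩ S, Set.inter_subset_left, h, Or.inl fun x hx => (hx.2 n hn).2⟩
    · exact ⟨A \ S, Set.sdiff_subset, h,
        Or.inr (Set.disjoint_left.2 fun x hx => (hx.2 n hn).2)⟩

/-- After fusion, `x ∈ X k` is decided by the first `s.card + k` terms of `x`, so the union is
the trace of a prefix-open set on `[s, B]`. -/
theorem IsCompletelyRamsey.iUnion {X : ℕ → Set IncSeq} (hX : ∀ k, IsCompletelyRamsey (X k)) :
    IsCompletelyRamsey (⋃ k, X k) := by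
  intro s A hA
  obtain ⟨B, hBA, hB, hdec⟩ := exists_fusion
    (fun u C => ∀ k ≤ u.card, Decides (X k) (s ∪ u) C)
    (fun _ _ _ h hP k hk => (hP k hk).mono h)
    (fun u C _ hC => by
      obtain ⟨C', hC'C, hC', hP⟩ := exists_subset_forall_finset
        (fun k C => Decides (X k) (s ∪ u) C) (fun _ _ _ h hP => hP.mono h)
        (Finset.range (u.card + 1)) (fun k _ C _ hC => hX k (s ∪ u) C hC) hC
      exact ⟨C', hC'C, hC', fun k hk => hP k (Finset.mem_range_succ_iff.2 hk)⟩) hA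
  replace hdec : ∀ u : Finset ℕ, ↑u ⊆ B → ∀ k ≤ u.card, Decides (X k) (s ∪ u) B :=
    fun u hu k hk => (hdec u hu k hk).of_tail Finset.subset_union_right
  let O : Set IncSeq := {x | ∃ m ≥ s.card, ∃ k, cyl (initSeg x m) B ⊆ X k}
  have hO : IsPrefixOpen O := fun x ⟨m, hm, k, hk⟩ =>
    ⟨m, fun y hy => ⟨m, hm, k, by rwa [initSeg_congr hy]⟩⟩
  obtain ⟨C, hCB, hC, hOC⟩ := hO.isCompletelyRamsey s B hB
  refine ⟨C, hCB.trans hBA, hC, hOC.imp (fun hsub x hx => ?_) fun hdisj => ?_⟩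
  · obtain ⟨m, hm, k, hk⟩ := hsub hx
    exact Set.mem_iUnion.2 ⟨k, hk (cyl_mono hCB (mem_cyl_initSeg hx hm))⟩
  · refine Set.disjoint_left.2 fun x hx hxX => ?_
    obtain ⟨k, hxk⟩ := Set.mem_iUnion.1 hxX
    have hm : s.card ≤ s.card + k := Nat.le_add_right _ _
    have hst := subset_initSeg_of_mem_cyl hx hm
    have hk : k ≤ (initSeg x (s.card + k) \ s).card := by
      rw [Finset.card_sdiff_of_subset hst, card_initSeg]
      omega
    have hxB : x ∈ cyl (initSeg x (s.card + k)) B := cyl_mono hCB (mem_cyl_initSeg hx hm)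
    have hdec' := hdec _ ((initSeg_sdiff_subset_of_mem_cyl hx _).trans hCB) k hk
    rw [Finset.union_sdiff_of_subset hst] at hdec'
    rcases hdec' with hsub | hdisj'
    · exact Set.disjoint_left.1 hdisj hx ⟨_, hm, k, hsub⟩
    · exact Set.disjoint_left.1 hdisj' hxB hxk

abbrev ramseyMeasurableSpace : MeasurableSpace IncSeq where
  MeasurableSet' := IsCompletelyRamsey
  measurableSet_empty _ A hA := ⟨A, subset_rfl, hA, Or.inr (Set.disjoint_empty _)⟩
  measurableSet_compl _ hX s A hA :=
    let ⟨B, hBA, hB, hdec⟩ := hX s A hA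
    ⟨B, hBA, hB, hdec.compl⟩
  measurableSet_iUnion _ := IsCompletelyRamsey.iUnion

theorem isCompletelyRamsey_of_measurableSet {X : Set IncSeq} (hX : MeasurableSet X) :
    IsCompletelyRamsey X :=
  (@measurable_pi_iff IncSeq ℕ (fun _ => ℕ) ramseyMeasurableSpace _ Subtype.val).2
    (fun n _ _ => isCompletelyRamsey_setOf_apply_mem n _) |>.comap_le X hX

theorem exists_infinite_forall_eq {V : Type*} [Finite V] [MeasurableSpace V]
    [MeasurableSingletonClass V] {ψ : IncSeq → V} (hψ : Measurable ψ) :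
    ∃ B : Set ℕ, B.Infinite ∧
      ∀ x y : IncSeq, Set.range x.1 ⊆ B → Set.range y.1 ⊆ B → ψ x = ψ y := by
  cases nonempty_fintype V
  obtain ⟨B, -, hB, hdec⟩ := exists_subset_forall_finset
    (fun v C => Decides (ψ ⁻¹' {v}) ∅ C) (fun _ _ _ h hP => hP.mono h) Finset.univ
    (fun v _ C _ hC =>
      isCompletelyRamsey_of_measurableSet (hψ (measurableSet_singleton v)) ∅ C hC)
    Set.infinite_univ
  refine ⟨B, hB, fun x y hx hy => ?_⟩
  rw [← mem_cyl_empty] at hx hy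
  rcases hdec (ψ x) (Finset.mem_univ _) with hsub | hdisj
  · exact (hsub hy).symm
  · exact absurd rfl (Set.disjoint_left.1 hdisj hx)

end GalvinPrikry

theorem stmt18 {V : Type*} [Fintype V] [MeasurableSpace V]
    [MeasurableSingletonClass V] (E : V → V → Prop)
    (S : {x : ℕ → ℕ // StrictMono x} → {x : ℕ → ℕ // StrictMono x})
    (hS : ∀ x n, (S x).1 n = x.1 (n+1))
    (ψ : {x : ℕ → ℕ // StrictMono x} → V) (hψ : Measurable ψ)
    (hhom : ∀ y, E (ψ y) (ψ (S y))) :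
    ∃ v : V, E v v := by
  obtain ⟨B, hB, hconst⟩ := GalvinPrikry.exists_infinite_forall_eq hψ
  let e : {x : ℕ → ℕ // StrictMono x} := ⟨Nat.nth (· ∈ B), Nat.nth_strictMono hB⟩
  have he : ∀ n, e.1 n ∈ B := Nat.nth_mem_of_infinite hB
  have hSe : ψ (S e) = ψ e := hconst (S e) e
    (Set.range_subset_iff.2 fun n => hS e n ▸ he (n + 1)) (Set.range_subset_iff.2 he)
  exact ⟨ψ e, hSe ▸ hhom e⟩
end
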